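/- arXiv:2605.05322 — 3 statements merged into one kernel-verified Lean document; each statement's English description precedes it below -/
import Mathlib

section
/- Let σ₁ = [[ζ, ζ+ζ⁻²], [ζ+ζ⁻², -ζ⁻¹]] where ζ = e^{2πi/5}, and let h be the integer matrix with rows (0,-1,-1,-1), (0,0,-1,0), (0,0,0,-1), (1,0,0,1) written in 2×2 blocks h = [[A,B],[C,D]]. Then h ∈ Sp(4,ℤ), h fixes σ₁ under the symplectic action (i.e. (Aσ₁+B)(Cσ₁+D)⁻¹ = σ₁), and det(Cσ₁ + D) = e^{2πi/5}. -/
open Matrix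

/-- The standard symplectic form `J = [[0, I], [-I, 0]]` over ℤ. -/
def symplJ (g : ℕ) : Matrix (Fin g ⊕ Fin g) (Fin g ⊕ Fin g) ℤ :=
  Matrix.fromBlocks 0 1 (-1) 0

noncomputable def zeta5 : ℂ := Complex.exp (2 * Real.pi * Complex.I / 5)

/-- The fixed point `σ₁` with `ζ = e^{2πi/5}`. -/
noncomputable def sigma1 : Matrix (Fin 2) (Fin 2) ℂ :=
  !![zeta5, zeta5 + zeta5 ^ (-2 : ℤ); zeta5 + zeta5 ^ (-2 : ℤ), -zeta5⁻¹]

lemma zeta5_prim : IsPrimitiveRoot zeta5 5 := by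
  simpa [zeta5] using Complex.isPrimitiveRoot_exp 5 (by norm_num)

lemma zeta5_pow : zeta5 ^ 5 = 1 := zeta5_prim.pow_eq_one

lemma zeta5_sum : zeta5 ^ 4 + zeta5 ^ 3 + zeta5 ^ 2 + zeta5 + 1 = 0 := by
  have h1 : zeta5 ≠ 1 := zeta5_prim.ne_one (by norm_num)
  have h : (zeta5 - 1) * (zeta5 ^ 4 + zeta5 ^ 3 + zeta5 ^ 2 + zeta5 + 1) = 0 := by
    linear_combination zeta5_pow
  rcases mul_eq_zero.mp h with h | h
  · exact absurd (sub_eq_zero.mp h) h1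
  · exact h

lemma zeta5_inv : zeta5⁻¹ = zeta5 ^ 4 :=
  inv_eq_of_mul_eq_one_right (by linear_combination zeta5_pow)

lemma zeta5_zpow : zeta5 ^ (-2 : ℤ) = zeta5 ^ 3 := by
  rw [show (-2 : ℤ) = -((2:ℕ) : ℤ) by norm_num, _root_.zpow_neg, zpow_natCast]
  exact inv_eq_of_mul_eq_one_right (by linear_combination zeta5_pow)

lemma sigma1_eq : sigma1 =
    !![zeta5, zeta5 + zeta5 ^ 3; zeta5 + zeta5 ^ 3, -zeta5 ^ 4] := by
  rw [sigma1, zeta5_zpow, zeta5_inv]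


/-- The element `h` with rows `(0,-1,-1,-1),(0,0,-1,0),(0,0,0,-1),(1,0,0,1)` is in
`Sp(4,ℤ)`, fixes `σ₁` under the symplectic action, and `det(Cσ₁+D) = e^{2πi/5}`. -/
theorem stmt5 :
    letI A : Matrix (Fin 2) (Fin 2) ℤ := !![0, -1; 0, 0]
    letI B : Matrix (Fin 2) (Fin 2) ℤ := !![-1, -1; -1, 0]
    letI C : Matrix (Fin 2) (Fin 2) ℤ := !![0, 0; 1, 0]
    letI D : Matrix (Fin 2) (Fin 2) ℤ := !![0, -1; 0, 1]
    Matrix.fromBlocks A B C D * symplJ 2 * (Matrix.fromBlocks A B C D)ᵀ = symplJ 2 ∧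
    IsUnit (C.map (Int.cast : ℤ → ℂ) * sigma1 + D.map (Int.cast : ℤ → ℂ)) ∧
    (A.map (Int.cast : ℤ → ℂ) * sigma1 + B.map (Int.cast : ℤ → ℂ)) *
      (C.map (Int.cast : ℤ → ℂ) * sigma1 + D.map (Int.cast : ℤ → ℂ))⁻¹ = sigma1 ∧
    (C.map (Int.cast : ℤ → ℂ) * sigma1 + D.map (Int.cast : ℤ → ℂ)).det =
      Complex.exp (2 * Real.pi * Complex.I / 5) := by
  have hY : (!![0, 0; 1, 0] : Matrix (Fin 2) (Fin 2) ℤ).map (Int.cast : ℤ → ℂ) * sigma1 +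
      (!![0, -1; 0, 1] : Matrix (Fin 2) (Fin 2) ℤ).map (Int.cast : ℤ → ℂ) =
      !![0, -1; zeta5, 1 + zeta5 + zeta5 ^ 3] := by
    ext i j
    fin_cases i <;> fin_cases j <;>
      simp [sigma1_eq, Matrix.mul_apply, Fin.sum_univ_succ] <;> ring
  have hdet : ((!![0, 0; 1, 0] : Matrix (Fin 2) (Fin 2) ℤ).map (Int.cast : ℤ → ℂ) * sigma1 +
      (!![0, -1; 0, 1] : Matrix (Fin 2) (Fin 2) ℤ).map (Int.cast : ℤ → ℂ)).det = zeta5 := by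
    rw [hY, Matrix.det_fin_two_of]; ring
  have hdu : IsUnit ((!![0, 0; 1, 0] : Matrix (Fin 2) (Fin 2) ℤ).map (Int.cast : ℤ → ℂ) * sigma1 +
      (!![0, -1; 0, 1] : Matrix (Fin 2) (Fin 2) ℤ).map (Int.cast : ℤ → ℂ)).det := by
    rw [hdet]; exact isUnit_iff_ne_zero.mpr (zeta5_prim.ne_zero (by norm_num))
  refine ⟨?_, ?_, ?_, ?_⟩
  · ext (i | i) (j | j) <;> fin_cases i <;> fin_cases j <;>
      simp [symplJ, Matrix.mul_apply, Matrix.fromBlocks, Fintype.sum_sum_type,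
        Fin.sum_univ_succ, Matrix.one_apply, Matrix.neg_apply] <;> decide
  · exact (Matrix.isUnit_iff_isUnit_det _).mpr hdu
  · have hX : (!![0, -1; 0, 0] : Matrix (Fin 2) (Fin 2) ℤ).map (Int.cast : ℤ → ℂ) * sigma1 +
        (!![-1, -1; -1, 0] : Matrix (Fin 2) (Fin 2) ℤ).map (Int.cast : ℤ → ℂ) =
        sigma1 * ((!![0, 0; 1, 0] : Matrix (Fin 2) (Fin 2) ℤ).map (Int.cast : ℤ → ℂ) * sigma1 +
          (!![0, -1; 0, 1] : Matrix (Fin 2) (Fin 2) ℤ).map (Int.cast : ℤ → ℂ)) := by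
      rw [hY]
      ext i j
      fin_cases i <;> fin_cases j <;>
        simp [sigma1_eq, Matrix.mul_apply, Fin.sum_univ_succ]
      all_goals (try linear_combination -zeta5_sum); all_goals (try linear_combination -zeta5_sum - zeta5 * zeta5_pow); all_goals (try linear_combination zeta5_pow); all_goals (try linear_combination zeta5_pow + zeta5 ^ 2 * zeta5_pow + zeta5_sum); all_goals linear_combination -zeta5_pow
    rw [hX, Matrix.mul_assoc, Matrix.mul_nonsing_inv _ hdu, Matrix.mul_one]
  · rw [hdet]; rfl
end

section
/- Let σ be a g×g complex symmetric matrix fixed by h = [[A,B],[C,D]] ∈ Sp(2g,ℤ) (i.e. (Aσ+B)(Cσ+D)⁻¹ = σ), and let 𝐅 be a g×g-matrix-valued function on symmetric matrices satisfying 𝐅(γ·M) = (CM+D) 𝐅(M) (CM+D)ᵀ for all γ ∈ Sp(2g,ℤ). Set N = Cσ + D. If no two eigenvalues λᵢ, λⱼ of N satisfy λᵢλⱼ = 1, then 𝐅(σ) = 0. -/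
open Matrix

/-!
At the fixed point the transformation law reads `X = N X Nᵀ` for `X = 𝐅(σ)`, i.e. the
Sylvester equation `N⁻¹ X = X Nᵀ`. The spectra of `N⁻¹` and `Nᵀ` are `{λ⁻¹}` and `{λ}`,
disjoint by hypothesis. With `p` the characteristic polynomial of `Nᵀ`, Cayley–Hamilton gives
`p(N⁻¹) X = X p(Nᵀ) = 0`, and `p(N⁻¹)` is invertible because no eigenvalue of `N⁻¹` is a
root of `p`; hence `X = 0`.
-/

open Polynomial

section

variable {K : Type*} [Field K] {m n : Type*} [Fintype m] [DecidableEq m] [Fintype n]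
  [DecidableEq n]

theorem Matrix.pow_mul_eq_mul_pow {A : Matrix m m K} {B : Matrix n n K} {X : Matrix m n K}
    (h : A * X = X * B) (k : ℕ) : A ^ k * X = X * B ^ k := by
  induction k with
  | zero => rw [pow_zero, pow_zero, Matrix.one_mul, Matrix.mul_one]
  | succ k ih => rw [pow_succ, pow_succ, Matrix.mul_assoc, h, ← Matrix.mul_assoc, ih,
      Matrix.mul_assoc]

theorem Matrix.aeval_mul_eq_mul_aeval {A : Matrix m m K} {B : Matrix n n K} {X : Matrix m n K}
    (h : A * X = X * B) (p : K[X]) : aeval A p * X = X * aeval B p := by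
  induction p using Polynomial.induction_on' with
  | add p q hp hq => rw [map_add, map_add, Matrix.add_mul, Matrix.mul_add, hp, hq]
  | monomial k c =>
    simp only [aeval_monomial, Algebra.algebraMap_eq_smul_one, Matrix.smul_mul, Matrix.mul_smul,
      Matrix.one_mul, pow_mul_eq_mul_pow h]

theorem Matrix.eq_zero_of_mul_eq_mul_of_disjoint_spectrum [IsAlgClosed K] {A : Matrix m m K}
    {B : Matrix n n K} {X : Matrix m n K} (hAB : Disjoint (spectrum K A) (spectrum K B))
    (h : A * X = X * B) : X = 0 := by
  have hunit : IsUnit (aeval A B.charpoly) := by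
    by_contra hA
    rw [(IsAlgClosed.splits B.charpoly).eq_prod_roots_of_monic B.charpoly_monic] at hA
    obtain ⟨k, hkA, hkB⟩ := spectrum.exists_mem_of_not_isUnit_aeval_prod hA
    exact hAB.ne_of_mem hkA (mem_spectrum_iff_isRoot_charpoly.mpr hkB) rfl
  have hzero : aeval A B.charpoly * X = 0 := by
    rw [aeval_mul_eq_mul_aeval h, aeval_self_charpoly, Matrix.mul_zero]
  rw [← Matrix.one_mul X, ← nonsing_inv_mul _ ((isUnit_iff_isUnit_det _).mp hunit),
    Matrix.mul_assoc, hzero, Matrix.mul_zero]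

theorem Matrix.mem_charpoly_roots_iff_mem_spectrum {A : Matrix n n K} {a : K} :
    a ∈ A.charpoly.roots ↔ a ∈ spectrum K A := by
  rw [mem_roots A.charpoly_monic.ne_zero, mem_spectrum_iff_isRoot_charpoly]

theorem Matrix.spectrum_transpose (A : Matrix n n K) : spectrum K Aᵀ = spectrum K A := by
  ext a
  rw [mem_spectrum_iff_isRoot_charpoly, mem_spectrum_iff_isRoot_charpoly, charpoly_transpose]

theorem Matrix.eq_zero_of_eq_mul_mul_transpose [IsAlgClosed K] {N X : Matrix n n K}
    (hN : IsUnit N) (h : X = N * X * Nᵀ)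
    (hspec : ∀ a ∈ spectrum K N, ∀ b ∈ spectrum K N, a * b ≠ 1) : X = 0 := by
  obtain ⟨u, rfl⟩ := hN
  have hsylv : (↑u⁻¹ : Matrix n n K) * X = X * (↑u)ᵀ := by
    conv_lhs => rw [h]
    rw [← Matrix.mul_assoc, ← Matrix.mul_assoc, Units.inv_mul, Matrix.one_mul]
  refine eq_zero_of_mul_eq_mul_of_disjoint_spectrum ?_ hsylv
  rw [← spectrum.map_inv, spectrum_transpose, Set.disjoint_left]
  intro a ha ha'
  exact hspec _ (Set.mem_inv.mp ha) _ ha'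
    (inv_mul_cancel₀ (spectrum.ne_zero_of_mem_of_unit ha'))

end

/-- If `𝐅` is a bipartite Siegel modular form, `σ` is fixed by `h = [[A,B],[C,D]] ∈ Sp(2g,ℤ)`,
and no two eigenvalues `λᵢ, λⱼ` of `N = Cσ+D` satisfy `λᵢλⱼ = 1`, then `𝐅(σ) = 0`. -/
theorem stmt10 (g : ℕ) (σ : Matrix (Fin g) (Fin g) ℂ) (hσ : σᵀ = σ)
    (A B C D : Matrix (Fin g) (Fin g) ℤ)
    (hSp : Matrix.fromBlocks A B C D * symplJ g * (Matrix.fromBlocks A B C D)ᵀ = symplJ g)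
    (hU : IsUnit (C.map (Int.cast : ℤ → ℂ) * σ + D.map (Int.cast : ℤ → ℂ)))
    (hfix : (A.map (Int.cast : ℤ → ℂ) * σ + B.map (Int.cast : ℤ → ℂ)) *
      (C.map (Int.cast : ℤ → ℂ) * σ + D.map (Int.cast : ℤ → ℂ))⁻¹ = σ)
    (F : Matrix (Fin g) (Fin g) ℂ → Matrix (Fin g) (Fin g) ℂ)
    (hF : ∀ A' B' C' D' : Matrix (Fin g) (Fin g) ℤ,
      Matrix.fromBlocks A' B' C' D' * symplJ g * (Matrix.fromBlocks A' B' C' D')ᵀ = symplJ g →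
      ∀ M : Matrix (Fin g) (Fin g) ℂ, Mᵀ = M →
      IsUnit (C'.map (Int.cast : ℤ → ℂ) * M + D'.map (Int.cast : ℤ → ℂ)) →
      F ((A'.map (Int.cast : ℤ → ℂ) * M + B'.map (Int.cast : ℤ → ℂ)) *
          (C'.map (Int.cast : ℤ → ℂ) * M + D'.map (Int.cast : ℤ → ℂ))⁻¹) =
        (C'.map (Int.cast : ℤ → ℂ) * M + D'.map (Int.cast : ℤ → ℂ)) * F M *
          (C'.map (Int.cast : ℤ → ℂ) * M + D'.map (Int.cast : ℤ → ℂ))ᵀ)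
    (heig : ∀ a ∈ (C.map (Int.cast : ℤ → ℂ) * σ + D.map (Int.cast : ℤ → ℂ)).charpoly.roots,
      ∀ b ∈ (C.map (Int.cast : ℤ → ℂ) * σ + D.map (Int.cast : ℤ → ℂ)).charpoly.roots,
        a * b ≠ 1) :
    F σ = 0 := by
  have hFσ := hF A B C D hSp σ hσ hU
  rw [hfix] at hFσ
  exact eq_zero_of_eq_mul_mul_transpose hU hFσ fun a ha b hb =>
    heig a (mem_charpoly_roots_iff_mem_spectrum.mpr ha) b
      (mem_charpoly_roots_iff_mem_spectrum.mpr hb)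
end

section
/- Let 𝐅 be a 2×2-matrix-valued function on 2×2 complex symmetric matrices satisfying 𝐅(γ·M) = (CM+D)𝐅(M)(CM+D)ᵀ for all γ ∈ Sp(4,ℤ). Then 𝐅(σ₃) = 0 at σ₃ = diag(i,i). -/
open Matrix

/-- The fixed point `σ₃ = diag(i, i)`. -/
noncomputable def sigma3 : Matrix (Fin 2) (Fin 2) ℂ := !![Complex.I, 0; 0, Complex.I]

/-- Any bipartite Siegel modular form of genus 2 vanishes at `σ₃ = diag(i,i)`. -/
theorem stmt11 (F : Matrix (Fin 2) (Fin 2) ℂ → Matrix (Fin 2) (Fin 2) ℂ)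
    (hF : ∀ A B C D : Matrix (Fin 2) (Fin 2) ℤ,
      Matrix.fromBlocks A B C D * symplJ 2 * (Matrix.fromBlocks A B C D)ᵀ = symplJ 2 →
      ∀ M : Matrix (Fin 2) (Fin 2) ℂ, Mᵀ = M →
      IsUnit (C.map (Int.cast : ℤ → ℂ) * M + D.map (Int.cast : ℤ → ℂ)) →
      F ((A.map (Int.cast : ℤ → ℂ) * M + B.map (Int.cast : ℤ → ℂ)) *
          (C.map (Int.cast : ℤ → ℂ) * M + D.map (Int.cast : ℤ → ℂ))⁻¹) =
        (C.map (Int.cast : ℤ → ℂ) * M + D.map (Int.cast : ℤ → ℂ)) * F M *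
          (C.map (Int.cast : ℤ → ℂ) * M + D.map (Int.cast : ℤ → ℂ))ᵀ) :
    F sigma3 = 0 := by
  have hsym : sigma3ᵀ = sigma3 := by
    ext i j; fin_cases i <;> fin_cases j <;> simp [sigma3]
  -- Generator 1: N₁ = diag(-i, -1)
  have key : ∀ (A B C D : Matrix (Fin 2) (Fin 2) ℤ) (N : Matrix (Fin 2) (Fin 2) ℂ),
      Matrix.fromBlocks A B C D * symplJ 2 * (Matrix.fromBlocks A B C D)ᵀ = symplJ 2 →
      C.map (Int.cast : ℤ → ℂ) * sigma3 + D.map (Int.cast : ℤ → ℂ) = N →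
      A.map (Int.cast : ℤ → ℂ) * sigma3 + B.map (Int.cast : ℤ → ℂ) = sigma3 * N →
      IsUnit N.det →
      F sigma3 = N * F sigma3 * Nᵀ := by
    intro A B C D N hsymp hN hAB hdet
    have hu : IsUnit (C.map (Int.cast : ℤ → ℂ) * sigma3 + D.map (Int.cast : ℤ → ℂ)) := by
      rw [hN, Matrix.isUnit_iff_isUnit_det]; exact hdet
    have := hF A B C D hsymp sigma3 hsym hu
    rw [hN, hAB, Matrix.mul_assoc, Matrix.mul_nonsing_inv N hdet, Matrix.mul_one] at this
    exact this
  have h1 : F sigma3 = !![-Complex.I, 0; 0, -1] * F sigma3 * !![-Complex.I, 0; 0, -1]ᵀ := by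
    apply key !![0,0;0,-1] !![1,0;0,0] !![-1,0;0,0] !![0,0;0,-1]
    · decide
    · ext i j; fin_cases i <;> fin_cases j <;>
        simp [sigma3, Matrix.mul_apply, Fin.sum_univ_succ]
    · ext i j; fin_cases i <;> fin_cases j <;>
        simp [sigma3, Matrix.mul_apply, Fin.sum_univ_succ]
    · simp [Matrix.det_fin_two]
  have h2 : F sigma3 = !![(0:ℂ),1;1,0] * F sigma3 * !![(0:ℂ),1;1,0]ᵀ := by
    apply key !![0,1;1,0] 0 0 !![0,1;1,0]
    · decide
    · ext i j; fin_cases i <;> fin_cases j <;>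
        simp [sigma3, Matrix.mul_apply, Fin.sum_univ_succ]
    · ext i j; fin_cases i <;> fin_cases j <;>
        simp [sigma3, Matrix.mul_apply, Fin.sum_univ_succ]
    · simp [Matrix.det_fin_two]
  set X := F sigma3 with hX
  have e1 := fun i j => congrArg (fun M : Matrix (Fin 2) (Fin 2) ℂ => M i j) h1
  have e2 := fun i j => congrArg (fun M : Matrix (Fin 2) (Fin 2) ℂ => M i j) h2
  simp only [Matrix.mul_apply, Matrix.transpose_apply, Fin.sum_univ_succ,
    Fin.sum_univ_zero, add_zero] at e1 e2
  have a00 := e1 0 0; have a01 := e1 0 1; have a10 := e1 1 0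
  have b11 := e2 1 1
  simp [Matrix.cons_val_zero, Matrix.cons_val_one] at a00 a01 a10 b11
  have h00 : X 0 0 = 0 := by
    linear_combination (1/2 : ℂ) * a00 + (X 0 0 / 2) * Complex.I_mul_I
  have h01 : X 0 1 = 0 := by
    linear_combination ((1 + Complex.I)/2) * a01 + (X 0 1 / 2) * Complex.I_mul_I
  have h10 : X 1 0 = 0 := by
    linear_combination ((1 + Complex.I)/2) * a10 + (X 1 0 / 2) * Complex.I_mul_I
  have h11 : X 1 1 = 0 := b11.trans h00
  ext i j
  fin_cases i <;> fin_cases j <;>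
    simp only [Matrix.zero_apply] <;>
    first
      | exact h00 | exact h01 | exact h10 | exact h11
end
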